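/- Suppose 1 ≤ k ≤ M and det(L_S) > 0 for every S ⊆ 𝒴 with |S| ≤ k. For each core c ∈ C define ρ_c = max_{u,v ∈ 𝒴_c} sqrt(L_{uu} + L_{vv} − 2L_{uv}) and d_c = min over all u ∈ 𝒴_c and all (k−1)-singular S with S ∩ 𝒴_c = ∅ of sqrt( det(L_{S∪{u}}) / det(L_S) ) (with det(L_∅) = 1). If d_c > ρ_c for every c ∈ C, then, setting γ = max_{c ∈ C} d_c/(d_c − ρ_c), every k-singular set Y ⊆ 𝒴 satisfies γ^{−2k} · det(L_Y) ≤ det(L_{C(Y)}) ≤ γ^{2k} · det(L_Y). -/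

import Mathlib

open Matrix Finset

variable {𝒴 : Type*}

/-- Principal minor of `A` indexed by the finite set `S`:
the determinant of the principal submatrix `A_S`. -/
noncomputable def pminor [DecidableEq 𝒴] (A : Matrix 𝒴 𝒴 ℝ) (S : Finset 𝒴) : ℝ :=
  (A.submatrix (fun i : S => (i : 𝒴)) (fun j : S => (j : 𝒴))).det

/-- `Y` is singular with respect to the partition whose parts are the fibers of the
core map `part` (so `𝒴_c = part⁻¹(c)`): every part contains at most one element of `Y`. -/
def IsSingular [DecidableEq 𝒴] (part : 𝒴 → 𝒴) (Y : Finset 𝒴) : Prop :=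
  ∀ c : 𝒴, (Y.filter fun y => part y = c).card ≤ 1

instance [DecidableEq 𝒴] [Fintype 𝒴] (part : 𝒴 → 𝒴) : DecidablePred (IsSingular part) :=
  fun _ => by unfold IsSingular; infer_instance

/-- The size `|𝒴_c|` of the part with core `c`. -/
def psize [Fintype 𝒴] [DecidableEq 𝒴] (part : 𝒴 → 𝒴) (c : 𝒴) : ℕ :=
  (Finset.univ.filter fun y => part y = c).card

/-- The rescaled core kernel `L̃` with entries `L̃_{c,c'} = sqrt(|𝒴_c|·|𝒴_{c'}|)·L_{c,c'}`. -/
noncomputable def coreK [Fintype 𝒴] [DecidableEq 𝒴] (L : Matrix 𝒴 𝒴 ℝ) (part : 𝒴 → 𝒴) :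
    Matrix 𝒴 𝒴 ℝ :=
  fun i j => Real.sqrt ((psize part i : ℝ) * (psize part j : ℝ)) * L i j

/-! For `det L_S > 0` and `u ∉ S`, the ratio `det L_{S ∪ {u}} / det L_S` is the diagonal entry
`Q u u` of the Schur complement `Q = L - L_{·,S} L_S⁻¹ L_{S,·}` (the squared distance of the
feature vector of `u` to the span of those of `S`). Both `Q` and `L - Q` are positive semidefinite,
hence `|√(Q u u) - √(Q v v)| ≤ √(L u u + L v v - 2 L u v) ≤ ρ_c` for `u, v` in the part of `c`.
Together with `d_c ≤ √(Q u u)` this shows that swapping one point of a `k`-singular set for its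
core changes the minor by a factor at most `(d_c / (d_c - ρ_c))² ≤ γ²`; swapping the `k` points of
`Y` one at a time gives `γ^{2k}`. -/

namespace Matrix

variable {n : Type*}

theorem PosSemidef.apply_le_sqrt_mul_sqrt {P : Matrix n n ℝ} (hP : P.PosSemidef)
    (u v : n) : P u v ≤ √(P u u) * √(P v v) := by
  have hdet := (hP.submatrix ![u, v]).det_nonneg
  rw [det_fin_two] at hdet
  simp only [submatrix_apply, cons_val_zero, cons_val_one] at hdet
  have hsymm : P v u = P u v := by simpa using hP.1.apply u v
  rw [← Real.sqrt_mul hP.diag_nonneg]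
  refine (le_abs_self _).trans (Real.abs_le_sqrt ?_)
  rw [hsymm] at hdet
  linarith

theorem PosSemidef.abs_sqrt_sub_sqrt_le {P : Matrix n n ℝ} (hP : P.PosSemidef)
    (u v : n) : |√(P u u) - √(P v v)| ≤ √(P u u + P v v - 2 * P u v) := by
  refine Real.abs_le_sqrt ?_
  nlinarith [hP.apply_le_sqrt_mul_sqrt u v, Real.sq_sqrt (hP.diag_nonneg (i := u)),
    Real.sq_sqrt (hP.diag_nonneg (i := v))]

theorem PosSemidef.two_mul_apply_le_add {P : Matrix n n ℝ} (hP : P.PosSemidef)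
    (u v : n) : 2 * P u v ≤ P u u + P v v := by
  nlinarith [hP.apply_le_sqrt_mul_sqrt u v, Real.sq_sqrt (hP.diag_nonneg (i := u)),
    Real.sq_sqrt (hP.diag_nonneg (i := v)), sq_nonneg (√(P u u) - √(P v v))]

variable [DecidableEq n]

/-- The Schur complement `L - L_{·,S} L_S⁻¹ L_{S,·}` of the principal block `L_S`, kept indexed by
all of `n` (its rows and columns at `S` vanish when `L_S` is invertible). -/
noncomputable def schurCompl (L : Matrix n n ℝ) (S : Finset n) : Matrix n n ℝ :=
  L - L.submatrix id (Subtype.val : S → n) * (L.submatrix (Subtype.val : S → n) Subtype.val)⁻¹ *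
    L.submatrix (Subtype.val : S → n) id

theorem pminor_singleton (A : Matrix n n ℝ) (u : n) : pminor A {u} = A u u :=
  det_unique _

theorem pminor_union_eq_mul_pminor_schurCompl (L : Matrix n n ℝ) {S T : Finset n}
    (hST : Disjoint S T) (hS : pminor L S ≠ 0) :
    pminor L (S ∪ T) = pminor L S * pminor (schurCompl L S) T := by
  have : Invertible (L.submatrix (Subtype.val : S → n) Subtype.val) :=
    invertibleOfIsUnitDet _ hS.isUnit
  have hblocks : (L.submatrix (Subtype.val : ↥(S ∪ T) → n) Subtype.val).submatrix
      (Equiv.Finset.union S T hST) (Equiv.Finset.union S T hST) =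
      fromBlocks (L.submatrix (Subtype.val : S → n) Subtype.val)
        (L.submatrix Subtype.val Subtype.val) (L.submatrix Subtype.val Subtype.val)
        (L.submatrix (Subtype.val : T → n) Subtype.val) := by
    ext (i | i) (j | j) <;> rfl
  rw [pminor, ← det_submatrix_equiv_self (Equiv.Finset.union S T hST), hblocks,
    det_fromBlocks₁₁, invOf_eq_nonsing_inv]
  congr 1

theorem pminor_insert_eq_mul_schurCompl (L : Matrix n n ℝ) {S : Finset n} {u : n} (hu : u ∉ S)
    (hS : pminor L S ≠ 0) :
    pminor L (insert u S) = pminor L S * schurCompl L S u u := by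
  rw [Finset.insert_eq, Finset.union_comm,
    pminor_union_eq_mul_pminor_schurCompl L (Finset.disjoint_singleton_right.mpr hu) hS,
    pminor_singleton]

variable [Fintype n] {L : Matrix n n ℝ}

theorem posSemidef_schurCompl (hL : L.PosSemidef) {S : Finset n} (hS : pminor L S ≠ 0) :
    (schurCompl L S).PosSemidef := by
  have hA : (L.submatrix (Subtype.val : S → n) Subtype.val).PosDef :=
    (hL.submatrix _).posDef_iff_det_ne_zero.mpr hS
  have : Invertible (L.submatrix (Subtype.val : S → n) Subtype.val) :=
    invertibleOfIsUnitDet _ hS.isUnit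
  have hblocks : L.submatrix (Sum.elim (Subtype.val : S → n) id) (Sum.elim Subtype.val id) =
      fromBlocks (L.submatrix Subtype.val Subtype.val) (L.submatrix Subtype.val id)
        (L.submatrix (Subtype.val : S → n) id)ᴴ L := by
    rw [conjTranspose_submatrix, hL.1.eq]
    ext (i | i) (j | j) <;> rfl
  have h := hL.submatrix (Sum.elim (Subtype.val : S → n) id)
  rwa [hblocks, PosDef.fromBlocks₁₁ _ _ hA, conjTranspose_submatrix, hL.1.eq] at h

theorem posSemidef_sub_schurCompl (hL : L.PosSemidef) (S : Finset n) :
    (L - schurCompl L S).PosSemidef := by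
  have hB : L.submatrix id (Subtype.val : S → n) = (L.submatrix Subtype.val id)ᴴ := by
    rw [conjTranspose_submatrix, hL.1.eq]
  rw [schurCompl, sub_sub_cancel, hB]
  exact (hL.submatrix _).inv.conjTranspose_mul_mul_same _

theorem abs_sqrt_schurCompl_sub_le (hL : L.PosSemidef) {S : Finset n} (hS : pminor L S ≠ 0)
    (u v : n) :
    |√(schurCompl L S u u) - √(schurCompl L S v v)| ≤ √(L u u + L v v - 2 * L u v) := by
  refine ((posSemidef_schurCompl hL hS).abs_sqrt_sub_sqrt_le u v).trans (Real.sqrt_le_sqrt ?_)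
  have := (posSemidef_sub_schurCompl hL S).two_mul_apply_le_add u v
  simp only [sub_apply] at this
  linarith

end Matrix

theorem pminor_submatrix_of_injOn {m n : Type*} [DecidableEq m] [DecidableEq n]
    (L : Matrix n n ℝ) {f : m → n} {Y : Finset m} (hf : Set.InjOn f Y) :
    pminor (L.submatrix f f) Y = pminor L (Y.image f) := by
  let e : Y ≃ Y.image f :=
    (Equiv.Set.imageOfInjOn f Y hf).trans (Equiv.setCongr Finset.coe_image.symm)
  rw [pminor, pminor, ← det_submatrix_equiv_self e]
  rfl

theorem le_mul_of_sub_le_of_div_sub_le {a b ρ d γ : ℝ} (hρ : 0 ≤ ρ) (hρd : ρ < d) (hda : d ≤ a)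
    (hba : b - a ≤ ρ) (hγ : d / (d - ρ) ≤ γ) : b ≤ γ * a := by
  rw [div_le_iff₀ (sub_pos.mpr hρd)] at hγ
  nlinarith [mul_nonneg hρ (sub_nonneg.mpr hda)]

theorem pminor_insert_le_sq_mul {n : Type*} [Fintype n] [DecidableEq n] {L : Matrix n n ℝ}
    (hL : L.PosSemidef) {S : Finset n} (hS : 0 < pminor L S) {u v : n} (hu : u ∉ S)
    (hv : v ∉ S) {ρ d γ : ℝ} (hρ : √(L u u + L v v - 2 * L u v) ≤ ρ) (hρd : ρ < d)
    (hdu : d ≤ √(pminor L (insert u S) / pminor L S)) (hγ : d / (d - ρ) ≤ γ) :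
    pminor L (insert v S) ≤ γ ^ 2 * pminor L (insert u S) := by
  have hQ := posSemidef_schurCompl hL hS.ne'
  rw [pminor_insert_eq_mul_schurCompl L hu hS.ne', mul_div_cancel_left₀ _ hS.ne'] at hdu
  have hvu : √(schurCompl L S v v) ≤ γ * √(schurCompl L S u u) :=
    le_mul_of_sub_le_of_div_sub_le ((Real.sqrt_nonneg _).trans hρ) hρd hdu
      ((le_abs_self _).trans ((abs_sub_comm _ _).trans_le
        ((abs_sqrt_schurCompl_sub_le hL hS.ne' u v).trans hρ))) hγ
  have hsq := pow_le_pow_left₀ (Real.sqrt_nonneg _) hvu 2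
  rw [mul_pow, Real.sq_sqrt hQ.diag_nonneg, Real.sq_sqrt hQ.diag_nonneg] at hsq
  rw [pminor_insert_eq_mul_schurCompl L hu hS.ne', pminor_insert_eq_mul_schurCompl L hv hS.ne']
  nlinarith

theorem pminor_insert_core_le_sq_mul {n : Type*} [Fintype n] [DecidableEq n]
    {L : Matrix n n ℝ} (hL : L.PosSemidef) {part : n → n} {k : ℕ} {c : n} (hc : part c = c)
    {ρ d γ : ℝ}
    (hρ : IsGreatest {x : ℝ | ∃ u v : n, part u = c ∧ part v = c ∧
      x = √(L u u + L v v - 2 * L u v)} ρ)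
    (hd : IsLeast {x : ℝ | ∃ u : n, part u = c ∧ ∃ S : Finset n, S.card = k - 1 ∧
      IsSingular part S ∧ (∀ s ∈ S, part s ≠ c) ∧ x = √(pminor L (insert u S) / pminor L S)} d)
    (hρd : ρ < d) (hγ : d / (d - ρ) ≤ γ) {X : Finset n} (hXcard : X.card = k - 1)
    (hXsing : IsSingular part X) (hXc : ∀ s ∈ X, part s ≠ c) (hX : 0 < pminor L X)
    {y : n} (hy : part y = c) :
    pminor L (insert c X) ≤ γ ^ 2 * pminor L (insert y X) ∧
      pminor L (insert y X) ≤ γ ^ 2 * pminor L (insert c X) := by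
  have hyX : y ∉ X := fun h => hXc y h hy
  have hcX : c ∉ X := fun h => hXc c h hc
  exact ⟨pminor_insert_le_sq_mul hL hX hyX hcX (hρ.2 ⟨y, c, hy, hc, rfl⟩) hρd
      (hd.2 ⟨y, hy, X, hXcard, hXsing, hXc, rfl⟩) hγ,
    pminor_insert_le_sq_mul hL hX hcX hyX (hρ.2 ⟨c, y, hc, hy, rfl⟩) hρd
      (hd.2 ⟨c, hc, X, hXcard, hXsing, hXc, rfl⟩) hγ⟩

section Partition

variable {n : Type*} [DecidableEq n] {part : n → n}

theorem isSingular_iff_injOn {Z : Finset n} : IsSingular part Z ↔ Set.InjOn part Z := by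
  simp only [IsSingular, Finset.card_le_one, Finset.mem_filter, Set.InjOn, Finset.mem_coe]
  exact ⟨fun h a ha b hb hab => h (part b) a ⟨ha, hab⟩ b ⟨hb, rfl⟩,
    fun h c a ha b hb => h ha.1 hb.1 (ha.2.trans hb.2.symm)⟩

theorem injOn_insert_apply_of_injOn_insert {y : n} {X : Finset n}
    (hpart : part (part y) = part y) (hy : y ∉ X) (h : Set.InjOn part ↑(insert y X)) :
    part y ∉ X ∧ Set.InjOn part ↑(insert (part y) X) := by
  rw [Finset.coe_insert, Set.injOn_insert (by simpa using hy)] at h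
  have hpy : part y ∉ X := fun hX => h.2 ⟨part y, hX, hpart⟩
  refine ⟨hpy, ?_⟩
  rw [Finset.coe_insert, Set.injOn_insert (by simpa using hpy), hpart]
  exact h

theorem le_pow_card_mul_image_union_of_step (hpart : ∀ y, part (part y) = part y)
    {f : Finset n → ℝ} {c : ℝ} (hc : 0 ≤ c) {k : ℕ}
    (hstep : ∀ y (X : Finset n), X.card = k - 1 → IsSingular part X →
      (∀ s ∈ X, part s ≠ part y) →
      f (insert (part y) X) ≤ c * f (insert y X) ∧ f (insert y X) ≤ c * f (insert (part y) X))
    {T W : Finset n} (hTW : Disjoint T W) (hcard : (T ∪ W).card = k)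
    (hinj : Set.InjOn part ↑(T ∪ W)) :
    f (T.image part ∪ W) ≤ c ^ T.card * f (T ∪ W) ∧
      f (T ∪ W) ≤ c ^ T.card * f (T.image part ∪ W) := by
  induction T using Finset.induction_on generalizing W with
  | empty => simp
  | @insert y T hyT ih =>
    rw [Finset.insert_union] at hcard hinj ⊢
    have hyX : y ∉ T ∪ W := by
      simp [hyT, Finset.disjoint_left.mp hTW (Finset.mem_insert_self y T)]
    rw [Finset.card_insert_of_notMem hyX] at hcard
    obtain ⟨hpyX, hinj'⟩ := injOn_insert_apply_of_injOn_insert (hpart y) hyX hinj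
    have hXsing : IsSingular part (T ∪ W) :=
      isSingular_iff_injOn.mpr (hinj.mono (by simp))
    have hXc : ∀ s ∈ T ∪ W, part s ≠ part y := fun s hs hsy =>
      (ne_of_mem_of_not_mem hs hyX) (hinj (Finset.mem_coe.mpr (Finset.mem_insert_of_mem hs))
        (Finset.mem_coe.mpr (Finset.mem_insert_self _ _)) hsy)
    obtain ⟨hup, hlo⟩ := hstep y (T ∪ W) (by omega) hXsing hXc
    obtain ⟨ihup, ihlo⟩ := ih (W := insert (part y) W)
      (Finset.disjoint_insert_right.mpr ⟨fun h => hpyX (by simp [h]), hTW.mono_left (by simp)⟩)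
      (by rw [Finset.union_insert, Finset.card_insert_of_notMem hpyX]; omega)
      (by rwa [Finset.union_insert])
    simp only [Finset.union_insert] at ihup ihlo
    rw [Finset.image_insert, Finset.insert_union, Finset.card_insert_of_notMem hyT, pow_succ]
    constructor
    · calc _ ≤ c ^ T.card * f (insert (part y) (T ∪ W)) := ihup
        _ ≤ c ^ T.card * (c * f (insert y (T ∪ W))) := by gcongr
        _ = _ := by ring
    · calc _ ≤ c * f (insert (part y) (T ∪ W)) := hlo
        _ ≤ c * (c ^ T.card * f (insert (part y) (T.image part ∪ W))) := by gcongr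
        _ = _ := by ring

end Partition

theorem det_replaced_gamma_bound_general
    [Fintype 𝒴] [DecidableEq 𝒴]
    (L : Matrix 𝒴 𝒴 ℝ) (hL : L.PosSemidef)
    (part : 𝒴 → 𝒴) (C : Finset 𝒴)
    (hmem : ∀ y, part y ∈ C) (hfix : ∀ c ∈ C, part c = c)
    (k : ℕ)
    (hdet : ∀ S : Finset 𝒴, S.card ≤ k → 0 < pminor L S)
    (ρ d : 𝒴 → ℝ)
    (hρ : ∀ c ∈ C, IsGreatest
      {x : ℝ | ∃ u v : 𝒴, part u = c ∧ part v = c ∧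
        x = Real.sqrt (L u u + L v v - 2 * L u v)} (ρ c))
    (hd : ∀ c ∈ C, IsLeast
      {x : ℝ | ∃ u : 𝒴, part u = c ∧ ∃ S : Finset 𝒴, S.card = k - 1 ∧ IsSingular part S ∧
        (∀ s ∈ S, part s ≠ c) ∧ x = Real.sqrt (pminor L (insert u S) / pminor L S)} (d c))
    (hsep : ∀ c ∈ C, ρ c < d c)
    (γ : ℝ) (hγ : IsGreatest {x : ℝ | ∃ c ∈ C, x = d c / (d c - ρ c)} γ)
    (Y : Finset 𝒴) (hcard : Y.card = k) (hsing : IsSingular part Y) :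
    (γ ^ (2 * k))⁻¹ * pminor L Y ≤ pminor (L.submatrix part part) Y ∧
      pminor (L.submatrix part part) Y ≤ γ ^ (2 * k) * pminor L Y := by
  have hinj := isSingular_iff_injOn.mp hsing
  obtain ⟨hup, hlo⟩ := le_pow_card_mul_image_union_of_step (f := pminor L) (k := k)
    (fun y => hfix _ (hmem y)) (sq_nonneg γ)
    (fun y X hXcard hXsing hXc => pminor_insert_core_le_sq_mul hL (hfix _ (hmem y))
      (hρ _ (hmem y)) (hd _ (hmem y)) (hsep _ (hmem y)) (hγ.2 ⟨_, hmem y, rfl⟩)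
      hXcard hXsing hXc (hdet X (by omega)) rfl)
    (Finset.disjoint_empty_right Y) (by rwa [Finset.union_empty]) (by rwa [Finset.union_empty])
  simp only [Finset.union_empty, hcard, ← pow_mul] at hup hlo
  rw [pminor_submatrix_of_injOn L hinj]
  have hpos : 0 < γ ^ (2 * k) := pos_of_mul_pos_left ((hdet Y hcard.le).trans_le hlo)
    (hdet _ (Finset.card_image_le.trans hcard.le)).le
  exact ⟨(inv_mul_le_iff₀ hpos).mpr hlo, hup⟩

/-- with `ρ_c`, `d_c` as in Lemma 4 and `γ = max_{c∈C} d_c/(d_c−ρ_c)`, if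
`d_c > ρ_c` for all cores then every `k`-singular `Y` satisfies
`γ^{−2k}·det(L_Y) ≤ det(L_{C(Y)}) ≤ γ^{2k}·det(L_Y)`. -/
theorem det_replaced_gamma_bound
    [Fintype 𝒴] [DecidableEq 𝒴]
    (L : Matrix 𝒴 𝒴 ℝ) (hL : L.PosSemidef)
    (part : 𝒴 → 𝒴) (C : Finset 𝒴) (M : ℕ) (hMcard : C.card = M)
    (hmem : ∀ y, part y ∈ C) (hfix : ∀ c ∈ C, part c = c)
    (k : ℕ) (hk : 1 ≤ k) (hkM : k ≤ M)
    (hdet : ∀ S : Finset 𝒴, S.card ≤ k → 0 < pminor L S)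
    (ρ d : 𝒴 → ℝ)
    (hρ : ∀ c ∈ C, IsGreatest
      {x : ℝ | ∃ u v : 𝒴, part u = c ∧ part v = c ∧
        x = Real.sqrt (L u u + L v v - 2 * L u v)} (ρ c))
    (hd : ∀ c ∈ C, IsLeast
      {x : ℝ | ∃ u : 𝒴, part u = c ∧ ∃ S : Finset 𝒴, S.card = k - 1 ∧ IsSingular part S ∧
        (∀ s ∈ S, part s ≠ c) ∧ x = Real.sqrt (pminor L (insert u S) / pminor L S)} (d c))
    (hsep : ∀ c ∈ C, ρ c < d c)
    (γ : ℝ) (hγ : IsGreatest {x : ℝ | ∃ c ∈ C, x = d c / (d c - ρ c)} γ)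
    (Y : Finset 𝒴) (hcard : Y.card = k) (hsing : IsSingular part Y) :
    (γ ^ (2 * k))⁻¹ * pminor L Y ≤ pminor (L.submatrix part part) Y ∧
      pminor (L.submatrix part part) Y ≤ γ ^ (2 * k) * pminor L Y :=
  det_replaced_gamma_bound_general L hL part C hmem hfix k hdet ρ d hρ hd hsep γ hγ Y hcard hsing
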